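/- Let s > 0 and let f : ℝⁿ → [0,∞) be measurable with f(0) > 0, and let z ∈ ℝⁿ. Then: (1) for every y ∈ ℝⁿ, L_s(f_z)(y) = (1 + s⟨z,y⟩)₊^{1/s} · L_s f(y/(1 + s⟨z,y⟩)) when 1 + s⟨z,y⟩ > 0, and L_s(f_z)(y) = 0 when 1 + s⟨z,y⟩ ≤ 0; (2) if moreover f(z) > 0, then {x : L_s f(x) > 0} ⊆ {x : 1 − s⟨z,x⟩ > 0} and ∫ L_s(f_z)(y) dy = ∫ L_s f(x) · (1 − s⟨z,x⟩)^{−(n+1+1/s)} dx. -/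

import Mathlib

open MeasureTheory Set
open scoped RealInnerProductSpace ENNReal

/-- For `s ≠ 0`, the `s`-concave dual of a nonnegative function `g`:
`L_s g(y) = inf {(1 − s⟨x,y⟩)₊^{1/s} / g(x) : g(x) > 0}`. -/
noncomputable def Ls {n : ℕ} (s : ℝ) (g : EuclideanSpace ℝ (Fin n) → ℝ)
    (y : EuclideanSpace ℝ (Fin n)) : ℝ :=
  ⨅ x : {x : EuclideanSpace ℝ (Fin n) // 0 < g x},
    (max (1 - s * ⟪x.1, y⟫) 0) ^ (1 / s) / g x.1

/-! Reindexing the infimum by `x ↦ x + z` and moving the positive factor `c = 1 + s⟪z, y⟫` inside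
`(1 - s⟪x, y⟫)₊ ^ (1 / s)` gives the translation formula. The integral identity is the change of
variables `y = x / (1 - s⟪z, x⟫)`: this projective map sends `{1 - s⟪z, x⟫ > 0}` bijectively onto
`{1 + s⟪z, y⟫ > 0}`, with inverse `y ↦ y / (1 + s⟪z, y⟫)`, and its derivative is a multiple of the
identity plus a rank-one map, with Jacobian `(1 - s⟪z, x⟫) ^ (-(n + 1))`. -/

open Module

theorem LinearMap.det_id_add_smulRight {R M : Type*} [CommRing R] [AddCommGroup M] [Module R M]
    [Module.Free R M] [Module.Finite R M] (f : M →ₗ[R] R) (v : M) :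
    (LinearMap.id + f.smulRight v).det = 1 + f v := by
  classical
  let b := Module.Free.chooseBasis R M
  have hM : LinearMap.toMatrix b b (f.smulRight v) =
      Matrix.replicateCol Unit (b.repr v) * Matrix.replicateRow Unit (fun j => f (b j)) := by
    ext i j
    simp [LinearMap.toMatrix_apply, Matrix.mul_apply, mul_comm]
  rw [← LinearMap.det_toMatrix b, map_add, LinearMap.toMatrix_id, hM,
    Matrix.det_one_add_replicateCol_mul_replicateRow]
  simp only [dotProduct]
  conv_rhs => rw [← b.sum_repr v]
  simp only [map_sum, map_smul, smul_eq_mul, mul_comm]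

theorem Real.inv_pow_succ_mul_inv_rpow {d : ℝ} (hd : 0 < d) (k : ℕ) (p : ℝ) :
    d⁻¹ ^ (k + 1) * d⁻¹ ^ p = d ^ (-((k : ℝ) + 1 + p)) := by
  rw [← Real.rpow_natCast, ← Real.rpow_add (inv_pos.2 hd), Real.inv_rpow hd.le,
    ← Real.rpow_neg hd.le]
  push_cast
  ring_nf

section ProjectiveMap

variable {E : Type*} [NormedAddCommGroup E] [InnerProductSpace ℝ E]

noncomputable def projectiveMap (a x : E) : E := (1 - ⟪a, x⟫)⁻¹ • x

theorem one_sub_inner_neg_projectiveMap {a x : E} (hx : 1 - ⟪a, x⟫ ≠ 0) :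
    1 - ⟪-a, projectiveMap a x⟫ = (1 - ⟪a, x⟫)⁻¹ := by
  rw [projectiveMap, inner_neg_left, real_inner_smul_right]
  field_simp
  ring

theorem projectiveMap_neg_projectiveMap {a x : E} (hx : 1 - ⟪a, x⟫ ≠ 0) :
    projectiveMap (-a) (projectiveMap a x) = x := by
  rw [projectiveMap, one_sub_inner_neg_projectiveMap hx, inv_inv, projectiveMap, smul_smul,
    mul_inv_cancel₀ hx, one_smul]

theorem mapsTo_projectiveMap (a : E) :
    MapsTo (projectiveMap a) {x | 0 < 1 - ⟪a, x⟫} {y | 0 < 1 - ⟪-a, y⟫} := fun x hx => by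
  rw [mem_ofPred_eq, one_sub_inner_neg_projectiveMap (ne_of_gt hx)]
  exact inv_pos.2 hx

theorem image_projectiveMap (a : E) :
    projectiveMap a '' {x | 0 < 1 - ⟪a, x⟫} = {y | 0 < 1 - ⟪-a, y⟫} := by
  refine (mapsTo_projectiveMap a).image_subset.antisymm fun y hy => ⟨projectiveMap (-a) y, ?_, ?_⟩
  · simpa using mapsTo_projectiveMap (-a) hy
  · simpa using projectiveMap_neg_projectiveMap (a := -a) (ne_of_gt hy)

theorem injOn_projectiveMap (a : E) : InjOn (projectiveMap a) {x | 0 < 1 - ⟪a, x⟫} :=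
  fun x hx x' hx' h => by
    rw [← projectiveMap_neg_projectiveMap (ne_of_gt hx), h,
      projectiveMap_neg_projectiveMap (ne_of_gt hx')]

theorem hasFDerivAt_projectiveMap {a x : E} (hx : 1 - ⟪a, x⟫ ≠ 0) :
    HasFDerivAt (projectiveMap a) ((1 - ⟪a, x⟫)⁻¹ • (ContinuousLinearMap.id ℝ E +
      ((1 - ⟪a, x⟫)⁻¹ • innerSL ℝ a).smulRight x)) x := by
  have hd : HasFDerivAt (fun w => 1 - ⟪a, w⟫) (-innerSL ℝ a) x :=
    (innerSL ℝ a).hasFDerivAt.const_sub 1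
  refine (((hasDerivAt_inv hx).comp_hasFDerivAt x hd).smul (hasFDerivAt_id x)).congr_fderiv ?_
  ext v
  simp only [smul_add, add_apply, smul_apply,
    ContinuousLinearMap.id_apply, ContinuousLinearMap.smulRight_apply, coe_innerSL_apply,
    smul_eq_mul, Function.comp_apply, smul_neg, neg_smul, neg_neg, id_eq, add_right_inj]
  generalize 1 - ⟪a, x⟫ = d
  module

theorem det_fderiv_projectiveMap [FiniteDimensional ℝ E] {a x : E} (hx : 1 - ⟪a, x⟫ ≠ 0) :
    ((1 - ⟪a, x⟫)⁻¹ • (ContinuousLinearMap.id ℝ E +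
      ((1 - ⟪a, x⟫)⁻¹ • innerSL ℝ a).smulRight x)).det = (1 - ⟪a, x⟫)⁻¹ ^ (finrank ℝ E + 1) := by
  have hdet : LinearMap.det (LinearMap.id +
      ((((1 - ⟪a, x⟫)⁻¹ • innerSL ℝ a).smulRight x : E →L[ℝ] E) : E →ₗ[ℝ] E)) =
      (1 - ⟪a, x⟫)⁻¹ := by
    refine (LinearMap.det_id_add_smulRight
      (((1 - ⟪a, x⟫)⁻¹ • innerSL ℝ a : E →L[ℝ] ℝ) : E →ₗ[ℝ] ℝ) x).trans ?_
    simp only [ContinuousLinearMap.toLinearMap_smul, ContinuousLinearMap.toLinearMap_innerSL_apply,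
      LinearMap.smul_apply, innerₛₗ_apply_apply, smul_eq_mul]
    field_simp
    ring
  rw [ContinuousLinearMap.det, ContinuousLinearMap.toLinearMap_smul, LinearMap.det_smul]
  push_cast
  rw [hdet, pow_succ]

theorem lintegral_projectiveMap [FiniteDimensional ℝ E] [MeasurableSpace E] [BorelSpace E]
    (μ : Measure E) [μ.IsAddHaarMeasure] (a : E) (F : E → ℝ≥0∞) :
    ∫⁻ y in {y | 0 < 1 - ⟪-a, y⟫}, F y ∂μ =
      ∫⁻ x in {x | 0 < 1 - ⟪a, x⟫},
        ENNReal.ofReal ((1 - ⟪a, x⟫)⁻¹ ^ (finrank ℝ E + 1)) * F (projectiveMap a x) ∂μ := by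
  have hS : MeasurableSet {x : E | 0 < 1 - ⟪a, x⟫} :=
    (isOpen_lt continuous_const (by fun_prop)).measurableSet
  rw [← image_projectiveMap, lintegral_image_eq_lintegral_abs_det_fderiv_mul μ hS
    (fun x hx => (hasFDerivAt_projectiveMap (ne_of_gt hx)).hasFDerivWithinAt)
    (injOn_projectiveMap a)]
  refine setLIntegral_congr_fun hS fun x hx => ?_
  rw [det_fderiv_projectiveMap (ne_of_gt hx), abs_of_pos (pow_pos (inv_pos.2 hx) _)]

end ProjectiveMap

section Ls

variable {n : ℕ}

theorem Ls_nonneg (s : ℝ) (g : EuclideanSpace ℝ (Fin n) → ℝ) (y : EuclideanSpace ℝ (Fin n)) :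
    0 ≤ Ls s g y :=
  Real.iInf_nonneg fun x => div_nonneg (Real.rpow_nonneg (le_max_right _ _) _) x.2.le

theorem Ls_le {s : ℝ} {g : EuclideanSpace ℝ (Fin n) → ℝ} {x : EuclideanSpace ℝ (Fin n)}
    (hx : 0 < g x) (y : EuclideanSpace ℝ (Fin n)) :
    Ls s g y ≤ max (1 - s * ⟪x, y⟫) 0 ^ (1 / s) / g x :=
  ciInf_le (f := fun x : {x // 0 < g x} => max (1 - s * ⟪x.1, y⟫) 0 ^ (1 / s) / g x.1)
    ⟨0, forall_mem_range.2 fun x => div_nonneg (Real.rpow_nonneg (le_max_right _ _) _) x.2.le⟩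
    ⟨x, hx⟩

theorem Ls_eq_zero_of_one_sub_inner_nonpos {s : ℝ} (hs : 0 < s) {g : EuclideanSpace ℝ (Fin n) → ℝ}
    {x y : EuclideanSpace ℝ (Fin n)} (hx : 0 < g x) (h : 1 - s * ⟪x, y⟫ ≤ 0) : Ls s g y = 0 := by
  refine le_antisymm ((Ls_le hx y).trans_eq ?_) (Ls_nonneg s g y)
  rw [max_eq_right h, Real.zero_rpow (one_div_ne_zero hs.ne'), zero_div]

theorem Ls_comp_add_right {s : ℝ} (f : EuclideanSpace ℝ (Fin n) → ℝ)
    (z y : EuclideanSpace ℝ (Fin n)) (hc : 0 < 1 + s * ⟪z, y⟫) :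
    Ls s (fun x => f (x + z)) y
      = (1 + s * ⟪z, y⟫) ^ (1 / s) * Ls s f ((1 + s * ⟪z, y⟫)⁻¹ • y) := by
  let shift : {x // 0 < f (x + z)} → {u // 0 < f u} := fun x => ⟨x.1 + z, x.2⟩
  have hshift : Function.Surjective shift := fun u =>
    ⟨⟨u.1 - z, by simpa using u.2⟩, Subtype.ext (sub_add_cancel _ _)⟩
  rw [Ls, Ls, Real.mul_iInf_of_nonneg (Real.rpow_nonneg hc.le _), ← hshift.iInf_comp]
  refine iInf_congr fun x => ?_
  have key : (1 + s * ⟪z, y⟫) * (1 - s * ⟪x.1 + z, (1 + s * ⟪z, y⟫)⁻¹ • y⟫)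
      = 1 - s * ⟪x.1, y⟫ := by
    rw [inner_add_left, real_inner_smul_right, real_inner_smul_right]
    field_simp
    ring
  dsimp only [shift]
  rw [← mul_div_assoc, ← Real.mul_rpow hc.le (le_max_right _ _), mul_max_of_nonneg _ _ hc.le,
    mul_zero, key]

theorem Ls_comp_add_right_projectiveMap {s : ℝ} (f : EuclideanSpace ℝ (Fin n) → ℝ)
    {z x : EuclideanSpace ℝ (Fin n)} (hx : 0 < 1 - s * ⟪z, x⟫) :
    Ls s (fun w => f (w + z)) (projectiveMap (s • z) x)
      = (1 - s * ⟪z, x⟫)⁻¹ ^ (1 / s) * Ls s f x := by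
  have hd : 1 - ⟪s • z, x⟫ ≠ 0 := by rw [real_inner_smul_left]; exact hx.ne'
  have hc : 1 + s * ⟪z, projectiveMap (s • z) x⟫ = (1 - s * ⟪z, x⟫)⁻¹ := by
    simpa [real_inner_smul_left, inner_neg_left] using one_sub_inner_neg_projectiveMap hd
  rw [Ls_comp_add_right f z _ (hc ▸ inv_pos.2 hx), hc, inv_inv, projectiveMap, real_inner_smul_left,
    smul_smul, mul_inv_cancel₀ hx.ne', one_smul]

end Ls

theorem Ls_translate_general (n : ℕ) (s : ℝ) (hs : 0 < s)
    (f : EuclideanSpace ℝ (Fin n) → ℝ) (hf0 : 0 < f 0) (z : EuclideanSpace ℝ (Fin n)) :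
    ((∀ y : EuclideanSpace ℝ (Fin n),
        (0 < 1 + s * ⟪z, y⟫ →
          Ls s (fun x => f (x + z)) y
            = (1 + s * ⟪z, y⟫) ^ (1 / s) * Ls s f ((1 + s * ⟪z, y⟫)⁻¹ • y))
        ∧ (1 + s * ⟪z, y⟫ ≤ 0 → Ls s (fun x => f (x + z)) y = 0))) ∧
    (0 < f z →
      ({x | 0 < Ls s f x} ⊆ {x | 0 < 1 - s * ⟪z, x⟫}) ∧
      (∫⁻ y, ENNReal.ofReal (Ls s (fun x => f (x + z)) y)
        = ∫⁻ x, ENNReal.ofReal (Ls s f x)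
            * ENNReal.ofReal ((1 - s * ⟪z, x⟫) ^ (-((n : ℝ) + 1 + 1 / s))))) := by
  have vanish (y) (hy : 1 + s * ⟪z, y⟫ ≤ 0) : Ls s (fun x => f (x + z)) y = 0 :=
    Ls_eq_zero_of_one_sub_inner_nonpos hs (x := -z) (by simpa using hf0)
      (by rw [inner_neg_left]; linarith)
  refine ⟨fun y => ⟨Ls_comp_add_right f z y, vanish y⟩, fun hfz => ?_⟩
  have Ls_pos_subset : {x | 0 < Ls s f x} ⊆ {x | 0 < 1 - s * ⟪z, x⟫} := fun x hx => by
    by_contra h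
    exact hx.ne' (Ls_eq_zero_of_one_sub_inner_nonpos hs hfz (not_lt.1 h))
  refine ⟨Ls_pos_subset, ?_⟩
  have hcv := lintegral_projectiveMap volume (s • z)
    fun y => ENNReal.ofReal (Ls s (fun x => f (x + z)) y)
  simp only [inner_neg_left, real_inner_smul_left, sub_neg_eq_add, finrank_euclideanSpace_fin]
    at hcv
  calc ∫⁻ y, ENNReal.ofReal (Ls s (fun x => f (x + z)) y)
      = ∫⁻ y in {y | 0 < 1 + s * ⟪z, y⟫}, ENNReal.ofReal (Ls s (fun x => f (x + z)) y) := by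
        refine (setLIntegral_eq_of_support_subset
          (Function.support_subset_iff'.2 fun y hy => ?_)).symm
        simp only [vanish y (not_lt.1 hy), ENNReal.ofReal_zero]
    _ = _ := hcv
    _ = ∫⁻ x in {x | 0 < 1 - s * ⟪z, x⟫}, ENNReal.ofReal (Ls s f x)
            * ENNReal.ofReal ((1 - s * ⟪z, x⟫) ^ (-((n : ℝ) + 1 + 1 / s))) := by
        refine setLIntegral_congr_fun (isOpen_lt continuous_const (by fun_prop)).measurableSet
          fun x (hx : 0 < 1 - s * ⟪z, x⟫) => ?_
        rw [Ls_comp_add_right_projectiveMap f hx, ← ENNReal.ofReal_mul (by positivity), ← mul_assoc,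
          Real.inv_pow_succ_mul_inv_rpow hx, mul_comm, ENNReal.ofReal_mul (Ls_nonneg s f x)]
    _ = _ := setLIntegral_eq_of_support_subset (Function.support_subset_iff'.2 fun x hx => by
        simp only [Ls_eq_zero_of_one_sub_inner_nonpos hs hfz (not_lt.1 hx), ENNReal.ofReal_zero,
          zero_mul])

/-- Properties of the `s`-concave dual of a translate `f_z = f(· + z)`, for `s > 0` and
`f ≥ 0` measurable with `f(0) > 0`:
(1) `L_s(f_z)(y) = (1 + s⟨z,y⟩)₊^{1/s} · L_s f(y/(1 + s⟨z,y⟩))` when `1 + s⟨z,y⟩ > 0`,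
and `L_s(f_z)(y) = 0` when `1 + s⟨z,y⟩ ≤ 0`;
(2) if moreover `f(z) > 0`, then `{L_s f > 0} ⊆ {x : 1 − s⟨z,x⟩ > 0}` and
`∫ L_s(f_z)(y) dy = ∫ L_s f(x) · (1 − s⟨z,x⟩)^{−(n+1+1/s)} dx`. -/
theorem Ls_translate (n : ℕ) (s : ℝ) (hs : 0 < s)
    (f : EuclideanSpace ℝ (Fin n) → ℝ) (hfmeas : Measurable f)
    (hfnonneg : ∀ x, 0 ≤ f x) (hf0 : 0 < f 0) (z : EuclideanSpace ℝ (Fin n)) :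
    ((∀ y : EuclideanSpace ℝ (Fin n),
        (0 < 1 + s * ⟪z, y⟫ →
          Ls s (fun x => f (x + z)) y
            = (1 + s * ⟪z, y⟫) ^ (1 / s) * Ls s f ((1 + s * ⟪z, y⟫)⁻¹ • y))
        ∧ (1 + s * ⟪z, y⟫ ≤ 0 → Ls s (fun x => f (x + z)) y = 0))) ∧
    (0 < f z →
      ({x | 0 < Ls s f x} ⊆ {x | 0 < 1 - s * ⟪z, x⟫}) ∧
      (∫⁻ y, ENNReal.ofReal (Ls s (fun x => f (x + z)) y)
        = ∫⁻ x, ENNReal.ofReal (Ls s f x)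
            * ENNReal.ofReal ((1 - s * ⟪z, x⟫) ^ (-((n : ℝ) + 1 + 1 / s))))) :=
  Ls_translate_general n s hs f hf0 z
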